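/- arXiv:1904.00574 — 2 statements merged into one kernel-verified Lean document; each statement's English description precedes it below -/
import Mathlib

section
/- Let 1 ≤ p < ∞, 1 ≤ s < ∞ with p < s. Suppose {Q_j} are dyadic cubes, a_j ∈ M^s_1(ℝ^n) with supp(a_j) ⊂ Q_j, and λ_j ≥ 0 with ‖Σ_j λ_j χ_{Q_j}‖_{M^p_1} < ∞. Then f = Σ_j λ_j a_j satisfies ‖f‖_{M^p_1} ≲ ‖Σ_j λ_j (‖a_j‖_{M^s_1}/|Q_j|^{1/s}) χ_{Q_j}‖_{M^p_1}. -/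
open MeasureTheory Metric ENNReal

noncomputable section

abbrev E (n : ℕ) := EuclideanSpace ℝ (Fin n)

/-- Half-open axis-parallel cube with corner `a` and side length `r`. -/
def Cube (n : ℕ) (a : Fin n → ℝ) (r : ℝ) : Set (E n) :=
  {y | ∀ i, a i ≤ y i ∧ y i < a i + r}

/-- The dyadic cube `2^{-l}(k + [0,1)^n)`. -/
def DyadicCube (n : ℕ) (l : ℤ) (k : Fin n → ℤ) : Set (E n) :=
  Cube n (fun i => (k i : ℝ) * 2 ^ (-l)) (2 ^ (-l))

/-- The concentric triple `3Q` of the dyadic cube `Q`. -/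
def Triple (n : ℕ) (l : ℤ) (k : Fin n → ℤ) : Set (E n) :=
  Cube n (fun i => ((k i : ℝ) - 1) * 2 ^ (-l)) (3 * 2 ^ (-l))

/-- `L^q` norm of a nonnegative function over a set `S`. -/
def lqNorm {n : ℕ} (q : ℝ) (S : Set (E n)) (f : E n → ℝ≥0∞) : ℝ≥0∞ :=
  (∫⁻ x in S, f x ^ q) ^ (1 / q)

/-- Morrey norm: supremum over all cubes. -/
def morreyNorm (n : ℕ) (p q : ℝ) (f : E n → ℝ≥0∞) : ℝ≥0∞ :=
  ⨆ (a : Fin n → ℝ) (r : ℝ) (_ : 0 < r),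
    volume (Cube n a r) ^ (1 / p - 1 / q) * lqNorm q (Cube n a r) f

/-- Morrey norm: supremum over dyadic cubes. -/
def morreyNormDyadic (n : ℕ) (p q : ℝ) (f : E n → ℝ≥0∞) : ℝ≥0∞ :=
  ⨆ (l : ℤ) (k : Fin n → ℤ),
    volume (DyadicCube n l k) ^ (1 / p - 1 / q) * lqNorm q (DyadicCube n l k) f

/-- Bilinear fractional integral of Grafakos/Kenig–Stein type. -/
def Jalpha (n : ℕ) (α : ℝ) (f₁ f₂ : E n → ℝ≥0∞) (x : E n) : ℝ≥0∞ :=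
  ∫⁻ y, f₁ (x + y) * f₂ (x - y) * ENNReal.ofReal (‖y‖ ^ (α - n))

/-- Centered Hardy–Littlewood maximal operator. -/
def HLMax (n : ℕ) (f : E n → ℝ≥0∞) (x : E n) : ℝ≥0∞ :=
  ⨆ (R : ℝ) (_ : 0 < R), (volume (ball x R))⁻¹ * ∫⁻ y in ball x R, f y

/-- Powered Hardy–Littlewood maximal operator `M^{(v)}`. -/
def powMax (n : ℕ) (v : ℝ) (f : E n → ℝ≥0∞) (x : E n) : ℝ≥0∞ :=
  ⨆ (R : ℝ) (_ : 0 < R), ((volume (ball x R))⁻¹ * ∫⁻ y in ball x R, f y ^ v) ^ (1 / v)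

/-- Cube centered at `x` of side length `2r`. -/
def CCube (n : ℕ) (x : E n) (r : ℝ) : Set (E n) :=
  {y | ∀ i, x i - r ≤ y i ∧ y i ≤ x i + r}

/-!
Fix a cube `Q` of side `r` and sort the atoms meeting `Q` by the side `2^{-l}` of their
dyadic cube. A small atom (`2^{-l} ≤ r`) lies in `3Q` and has `∫ a_j ≤ μ_j |Q_j|`, so the
small atoms together contribute at most `∫_{3Q} g ≤ ‖g‖_{M^p_1} |3Q|^{1-1/p}`, where
`g = ∑ λ_j μ_j χ_{Q_j}` is the majorant on the right. A big atom only contributes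
`‖a_j‖_{M^s_1} |Q|^{1-1/s}`; the big atoms of one level `L` all lie in a cube of side
`3 · 2^{-L}`, which bounds their contribution by the same quantity times
`(r / 2^{-L})^{n(1/p-1/s)}`, and these factors sum geometrically over the levels above `r`.
In dimension `0` every cube is the whole space and the Morrey norm is the integral.
-/

lemma div_rpow_mul_self {x y : ℝ≥0∞} (hy0 : y ≠ 0) (hyt : y ≠ ∞) (σ : ℝ) :
    x / y ^ σ * y = x * y ^ (1 - σ) := by
  rw [div_eq_mul_inv, ← ENNReal.rpow_neg, mul_assoc, sub_eq_neg_add,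
    ENNReal.rpow_add _ _ hy0 hyt, ENNReal.rpow_one]

lemma tsum_ite_mul_measure_le_setLIntegral {α ι : Type*} [MeasurableSpace α] [Countable ι]
    (μ : Measure α) {S : ι → Set α} (hS : ∀ j, MeasurableSet (S j)) (w : ι → ℝ≥0∞)
    {R : Set α} (P : ι → Prop) [DecidablePred P] (hPR : ∀ j, P j → S j ⊆ R) :
    ∑' j, (if P j then w j * μ (S j) else 0) ≤
      ∫⁻ x in R, ∑' j, w j * (S j).indicator (fun _ => 1) x ∂μ := by
  rw [lintegral_tsum fun j => ((measurable_const.indicator (hS j)).const_mul _).aemeasurable]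
  refine ENNReal.tsum_le_tsum fun j => ?_
  split_ifs with hj
  · rw [lintegral_const_mul _ (measurable_const.indicator (hS j)),
      lintegral_indicator_const (hS j), one_mul, Measure.restrict_apply (hS j),
      Set.inter_eq_left.2 (hPR j hj)]
  · exact zero_le

lemma tsum_ite_rpow_div_zpow_le {r β : ℝ} (hr : 0 < r) (hβ : 0 < β) :
    ∑' L : ℤ, (if r < (2 : ℝ) ^ (-L) then ENNReal.ofReal ((r / 2 ^ (-L)) ^ β) else 0) ≤
      (1 - ENNReal.ofReal (2 ^ (-β)))⁻¹ := by
  set g : ℤ → ℝ≥0∞ := fun L => if r < (2 : ℝ) ^ (-L) then ENNReal.ofReal ((r / 2 ^ (-L)) ^ β)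
    else 0
  obtain ⟨N, hNr, hrN⟩ := exists_mem_Ico_zpow hr (_root_.one_lt_two : (1 : ℝ) < 2)
  set φ : ℕ → ℤ := fun m => -(N + 1 + m)
  have hφ : Function.Injective φ := fun m m' h => by simpa [φ] using h
  have hsupp : Function.support g ⊆ Set.range φ := by
    intro L hL
    have hrL : r < 2 ^ (-L) := by
      by_contra h
      exact hL (if_neg h)
    have hNL : N < -L := (zpow_lt_zpow_iff_right₀ _root_.one_lt_two).1 (hNr.trans_lt hrL)
    exact ⟨(-L - N - 1).toNat, by simp only [φ]; omega⟩
  rw [← tsum_subtype_eq_of_support_subset hsupp, tsum_range g hφ, ← ENNReal.tsum_geometric]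
  refine ENNReal.tsum_le_tsum fun m => ?_
  simp only [g]
  split_ifs
  · rw [← ENNReal.ofReal_pow (by positivity)]
    refine ENNReal.ofReal_le_ofReal ?_
    have hratio : r / 2 ^ (-φ m) ≤ ((2 : ℝ) ^ m)⁻¹ := by
      rw [div_le_iff₀ (zpow_pos two_pos _), neg_neg, zpow_add₀ two_ne_zero, zpow_natCast,
        mul_comm, mul_assoc, mul_inv_cancel₀ (by positivity), mul_one]
      exact hrN.le
    calc (r / 2 ^ (-φ m)) ^ β ≤ (((2 : ℝ) ^ m)⁻¹) ^ β := by gcongr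
      _ = (2 ^ (-β)) ^ m := by
        rw [Real.inv_rpow (by positivity), ← Real.rpow_natCast, ← Real.rpow_natCast,
          ← Real.rpow_mul two_pos.le, ← Real.rpow_mul two_pos.le, ← Real.rpow_neg two_pos.le]
        ring_nf
  · exact zero_le

section Cubes

variable {n : ℕ}

lemma cube_eq_preimage (c : Fin n → ℝ) (r : ℝ) :
    Cube n c r = (MeasurableEquiv.toLp 2 (Fin n → ℝ)).symm ⁻¹'
      Set.univ.pi fun i => Set.Ico (c i) (c i + r) := by
  ext x
  simp [Cube, Set.mem_pi, MeasurableEquiv.coe_toLp_symm]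

lemma measurableSet_cube (c : Fin n → ℝ) (r : ℝ) : MeasurableSet (Cube n c r) := by
  rw [cube_eq_preimage]
  exact (MeasurableEquiv.toLp 2 _).symm.measurable (.univ_pi fun _ => measurableSet_Ico)

lemma volume_cube (c : Fin n → ℝ) (r : ℝ) : volume (Cube n c r) = ENNReal.ofReal r ^ n := by
  rw [cube_eq_preimage, (EuclideanSpace.volume_preserving_symm_measurableEquiv_toLp
    (Fin n)).measure_preimage (MeasurableSet.univ_pi fun _ => measurableSet_Ico).nullMeasurableSet]
  simp [volume_pi_pi, Real.volume_Ico]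

lemma volume_cube_ne_zero (c : Fin n → ℝ) {r : ℝ} (hr : 0 < r) : volume (Cube n c r) ≠ 0 := by
  simp [volume_cube, hr]

lemma volume_cube_ne_top (c : Fin n → ℝ) (r : ℝ) : volume (Cube n c r) ≠ ∞ := by
  simp [volume_cube]

lemma volume_dyadicCube_ne_zero (l : ℤ) (k : Fin n → ℤ) : volume (DyadicCube n l k) ≠ 0 :=
  volume_cube_ne_zero _ (zpow_pos two_pos _)

lemma volume_dyadicCube_ne_top (l : ℤ) (k : Fin n → ℤ) : volume (DyadicCube n l k) ≠ ∞ :=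
  volume_cube_ne_top _ _

lemma volume_cube_three_mul (c c' : Fin n → ℝ) (r : ℝ) :
    volume (Cube n c' (3 * r)) = 3 ^ n * volume (Cube n c r) := by
  rw [volume_cube, volume_cube, ENNReal.ofReal_mul (by norm_num), mul_pow, ENNReal.ofReal_ofNat]

lemma dyadicCube_subset_cube {l : ℤ} {k : Fin n → ℤ} {c : Fin n → ℝ} {r ρ : ℝ}
    (hl : (2 : ℝ) ^ (-l) ≤ ρ) (hr : r ≤ ρ) (h : (DyadicCube n l k ∩ Cube n c r).Nonempty) :
    DyadicCube n l k ⊆ Cube n (fun i => c i - ρ) (3 * ρ) := by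
  obtain ⟨x, hxD, hxQ⟩ := h
  intro y hy i
  have := hxD i; have := hxQ i; have := hy i
  simp only at *
  constructor <;> linarith

end Cubes

section Morrey

variable {n : ℕ}

lemma setLIntegral_cube_le_morreyNorm (p : ℝ) (f : E n → ℝ≥0∞) (c : Fin n → ℝ) {r : ℝ}
    (hr : 0 < r) :
    ∫⁻ x in Cube n c r, f x ≤ morreyNorm n p 1 f * volume (Cube n c r) ^ (1 - 1 / p) := by
  have hle : volume (Cube n c r) ^ (1 / p - 1 / 1) * lqNorm 1 (Cube n c r) f
      ≤ morreyNorm n p 1 f :=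
    le_iSup₂_of_le c r (le_iSup (fun _ : 0 < r => _) hr)
  simp only [lqNorm, div_one, ENNReal.rpow_one] at hle
  calc ∫⁻ x in Cube n c r, f x
      = volume (Cube n c r) ^ (1 / p - 1) * (∫⁻ x in Cube n c r, f x) *
          volume (Cube n c r) ^ (1 - 1 / p) := by
        rw [mul_comm, ← mul_assoc, ← ENNReal.rpow_add _ _ (volume_cube_ne_zero c hr)
          (volume_cube_ne_top c r)]
        simp
    _ ≤ _ := by gcongr

lemma morreyNorm_le_of_setLIntegral_le {p : ℝ} {f : E n → ℝ≥0∞} {B : ℝ≥0∞}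
    (h : ∀ c r, 0 < r → ∫⁻ x in Cube n c r, f x ≤ B * volume (Cube n c r) ^ (1 - 1 / p)) :
    morreyNorm n p 1 f ≤ B := by
  refine iSup_le fun c => iSup_le fun r => iSup_le fun hr => ?_
  calc volume (Cube n c r) ^ (1 / p - 1 / 1) * lqNorm 1 (Cube n c r) f
      ≤ volume (Cube n c r) ^ (1 / p - 1) * (B * volume (Cube n c r) ^ (1 - 1 / p)) := by
        simpa [lqNorm] using mul_le_mul_right (h c r hr) _
    _ = B := by
        rw [mul_left_comm, ← ENNReal.rpow_add _ _ (volume_cube_ne_zero c hr)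
          (volume_cube_ne_top c r)]
        simp

lemma morreyNorm_zero_dim (p : ℝ) (f : E 0 → ℝ≥0∞) : morreyNorm 0 p 1 f = ∫⁻ x, f x := by
  have hcube : ∀ c r, Cube 0 c r = Set.univ := fun c r =>
    Set.eq_univ_of_forall fun _ i => i.elim0
  have hvol : volume (Set.univ : Set (E 0)) = 1 := by
    rw [← hcube 0 1, volume_cube, pow_zero]
  apply le_antisymm
  · exact morreyNorm_le_of_setLIntegral_le fun c r _ => by simp [hcube, hvol]
  · simpa [hcube, hvol] using setLIntegral_cube_le_morreyNorm p f 0 one_pos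

end Morrey

section Atoms

open scoped Classical

variable {n : ℕ} (s : ℝ)

def atomHeight (f : E n → ℝ≥0∞) (l : ℤ) (k : Fin n → ℤ) : ℝ≥0∞ :=
  morreyNorm n s 1 f / volume (DyadicCube n l k) ^ (1 / s)

variable {s} {f : E n → ℝ≥0∞} {l : ℤ} {k : Fin n → ℤ}

lemma atomHeight_mul_volume :
    atomHeight s f l k * volume (DyadicCube n l k) =
      morreyNorm n s 1 f * volume (DyadicCube n l k) ^ (1 - 1 / s) :=
  div_rpow_mul_self (volume_dyadicCube_ne_zero l k) (volume_dyadicCube_ne_top l k) _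

lemma lintegral_le_atomHeight_mul_volume (hf : Function.support f ⊆ DyadicCube n l k) :
    ∫⁻ x, f x ≤ atomHeight s f l k * volume (DyadicCube n l k) := by
  rw [← setLIntegral_eq_of_support_subset hf, atomHeight_mul_volume]
  exact setLIntegral_cube_le_morreyNorm s f _ (zpow_pos two_pos _)

variable (s) in
lemma setLIntegral_cube_le_ite_add_ite (hf : Function.support f ⊆ DyadicCube n l k)
    (c : Fin n → ℝ) {r : ℝ} (hr : 0 < r) :
    ∫⁻ x in Cube n c r, f x ≤
      (if (2 : ℝ) ^ (-l) ≤ r ∧ (DyadicCube n l k ∩ Cube n c r).Nonempty then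
        atomHeight s f l k * volume (DyadicCube n l k) else 0) +
      (if r < (2 : ℝ) ^ (-l) ∧ (DyadicCube n l k ∩ Cube n c r).Nonempty then
        morreyNorm n s 1 f * volume (Cube n c r) ^ (1 - 1 / s) else 0) := by
  by_cases hmeet : (DyadicCube n l k ∩ Cube n c r).Nonempty
  · rcases le_or_gt ((2 : ℝ) ^ (-l)) r with hsmall | hbig
    · simp only [hsmall, hmeet, not_lt.2 hsmall, and_self, and_true, if_true, if_false, add_zero]
      exact (setLIntegral_le_lintegral _ _).trans (lintegral_le_atomHeight_mul_volume hf)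
    · simp only [hbig, hmeet, not_le.2 hbig, and_self, and_true, if_true, if_false, zero_add]
      exact setLIntegral_cube_le_morreyNorm s f c hr
  · have hzero : Set.EqOn f 0 (Cube n c r) := fun x hxQ =>
      Function.notMem_support.1 fun hx => hmeet ⟨x, hf hx, hxQ⟩
    simp [setLIntegral_congr_fun (measurableSet_cube c r) hzero]

end Atoms

section Decomposition

open scoped Classical

variable {n : ℕ} {s : ℝ} {l : ℕ → ℤ} {k : ℕ → Fin n → ℤ} {a : ℕ → E n → ℝ≥0∞}
  {lam : ℕ → ℝ≥0∞}

variable (n s l k a lam) in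
def atomicMajorant (x : E n) : ℝ≥0∞ :=
  ∑' j, lam j * atomHeight s (a j) (l j) (k j) *
    (DyadicCube n (l j) (k j)).indicator (fun _ => 1) x

lemma tsum_ite_mul_volume_le_morreyNorm (p : ℝ) (P : ℕ → Prop) [DecidablePred P]
    {b : Fin n → ℝ} {ρ : ℝ} (hρ : 0 < ρ) (hP : ∀ j, P j → DyadicCube n (l j) (k j) ⊆ Cube n b ρ) :
    ∑' j, (if P j then
        lam j * atomHeight s (a j) (l j) (k j) * volume (DyadicCube n (l j) (k j)) else 0) ≤
      morreyNorm n p 1 (atomicMajorant n s l k a lam) * volume (Cube n b ρ) ^ (1 - 1 / p) :=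
  (tsum_ite_mul_measure_le_setLIntegral volume (fun _ => measurableSet_cube _ _) _ P hP).trans
    (setLIntegral_cube_le_morreyNorm p _ b hρ)

lemma lintegral_tsum_le_lintegral_atomicMajorant (ha : ∀ j, Measurable (a j))
    (hsupp : ∀ j, Function.support (a j) ⊆ DyadicCube n (l j) (k j)) :
    ∫⁻ x, ∑' j, lam j * a j x ≤ ∫⁻ x, atomicMajorant n s l k a lam x := by
  rw [lintegral_tsum fun j => ((ha j).const_mul _).aemeasurable, ← setLIntegral_univ]
  calc ∑' j, ∫⁻ x, lam j * a j x
      ≤ ∑' j, (if True then lam j * atomHeight s (a j) (l j) (k j) *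
          volume (DyadicCube n (l j) (k j)) else 0) := by
        refine ENNReal.tsum_le_tsum fun j => ?_
        rw [lintegral_const_mul _ (ha j), if_pos trivial, mul_assoc]
        gcongr
        exact lintegral_le_atomHeight_mul_volume (hsupp j)
    _ ≤ _ := tsum_ite_mul_measure_le_setLIntegral volume (fun _ => measurableSet_cube _ _) _ _
        fun _ _ => Set.subset_univ _

lemma setLIntegral_cube_tsum_le (ha : ∀ j, Measurable (a j))
    (hsupp : ∀ j, Function.support (a j) ⊆ DyadicCube n (l j) (k j)) (c : Fin n → ℝ) {r : ℝ}
    (hr : 0 < r) :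
    ∫⁻ x in Cube n c r, ∑' j, lam j * a j x ≤
      ∑' j, (if (2 : ℝ) ^ (-l j) ≤ r ∧ (DyadicCube n (l j) (k j) ∩ Cube n c r).Nonempty then
        lam j * atomHeight s (a j) (l j) (k j) * volume (DyadicCube n (l j) (k j)) else 0) +
      ∑' j, (if r < (2 : ℝ) ^ (-l j) ∧ (DyadicCube n (l j) (k j) ∩ Cube n c r).Nonempty then
        lam j * morreyNorm n s 1 (a j) * volume (Cube n c r) ^ (1 - 1 / s) else 0) := by
  rw [lintegral_tsum fun j => ((ha j).const_mul _).aemeasurable, ← ENNReal.tsum_add]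
  refine ENNReal.tsum_le_tsum fun j => ?_
  rw [lintegral_const_mul _ (ha j)]
  refine (mul_le_mul_right (setLIntegral_cube_le_ite_add_ite s (hsupp j) c hr) _).trans_eq ?_
  simp only [mul_add, mul_ite, mul_zero, mul_assoc]

lemma tsum_smallAtoms_le (p : ℝ) (c : Fin n → ℝ) {r : ℝ} (hr : 0 < r) :
    ∑' j, (if (2 : ℝ) ^ (-l j) ≤ r ∧ (DyadicCube n (l j) (k j) ∩ Cube n c r).Nonempty then
        lam j * atomHeight s (a j) (l j) (k j) * volume (DyadicCube n (l j) (k j)) else 0) ≤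
      morreyNorm n p 1 (atomicMajorant n s l k a lam) *
        (3 ^ n * volume (Cube n c r)) ^ (1 - 1 / p) := by
  rw [← volume_cube_three_mul c (fun i => c i - r)]
  exact tsum_ite_mul_volume_le_morreyNorm p _ (by positivity)
    fun j hj => dyadicCube_subset_cube hj.1 le_rfl hj.2

lemma tsum_levelAtoms_le (p : ℝ) (L : ℤ) (c : Fin n → ℝ) {r : ℝ} (hr : 0 < r)
    (hrL : r ≤ (2 : ℝ) ^ (-L)) :
    ∑' j, (if l j = L ∧ (DyadicCube n (l j) (k j) ∩ Cube n c r).Nonempty then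
        lam j * morreyNorm n s 1 (a j) * volume (Cube n c r) ^ (1 - 1 / s) else 0) ≤
      morreyNorm n p 1 (atomicMajorant n s l k a lam) *
        (3 ^ n * volume (Cube n c r)) ^ (1 - 1 / p) *
        ENNReal.ofReal ((r / 2 ^ (-L)) ^ ((n : ℝ) * (1 / p - 1 / s))) := by
  set D : ℝ≥0∞ := ENNReal.ofReal (2 ^ (-L)) ^ n
  have hD0 : D ≠ 0 := pow_ne_zero _ (ENNReal.ofReal_pos.2 (zpow_pos two_pos _)).ne'
  have hDt : D ≠ ∞ := pow_ne_top ofReal_ne_top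
  have hvol : ∀ j, l j = L → volume (DyadicCube n (l j) (k j)) = D := fun j hj => by
    rw [hj]; exact volume_cube _ _
  have hterm : ∀ j, (if l j = L ∧ (DyadicCube n (l j) (k j) ∩ Cube n c r).Nonempty then
      lam j * morreyNorm n s 1 (a j) * volume (Cube n c r) ^ (1 - 1 / s) else 0) =
      (if l j = L ∧ (DyadicCube n (l j) (k j) ∩ Cube n c r).Nonempty then
        lam j * atomHeight s (a j) (l j) (k j) * volume (DyadicCube n (l j) (k j)) else 0) *
      (D ^ (1 / s - 1) * volume (Cube n c r) ^ (1 - 1 / s)) := by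
    intro j
    split_ifs with hj
    · rw [mul_assoc (lam j) (atomHeight _ _ _ _), atomHeight_mul_volume, hvol j hj.1, mul_assoc,
        mul_assoc, mul_assoc, ← mul_assoc (D ^ _), ← ENNReal.rpow_add _ _ hD0 hDt]
      simp
    · rw [zero_mul]
  have hscale : (3 ^ n * D) ^ (1 - 1 / p) * (D ^ (1 / s - 1) * volume (Cube n c r) ^ (1 - 1 / s)) =
      (3 ^ n * volume (Cube n c r)) ^ (1 - 1 / p) *
        ENNReal.ofReal ((r / 2 ^ (-L)) ^ ((n : ℝ) * (1 / p - 1 / s))) := by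
    rw [volume_cube, ← ENNReal.ofReal_ofNat 3]
    simp (disch := positivity) only [D, ← ENNReal.ofReal_pow, ← ENNReal.ofReal_mul,
      ENNReal.ofReal_rpow_of_pos]
    congr 1
    simp (disch := positivity) only [Real.rpow_def_of_pos, ← Real.exp_add, Real.log_mul,
      Real.log_pow, Real.log_div]
    ring_nf
  have hpack := tsum_ite_mul_volume_le_morreyNorm (s := s) (l := l) (k := k) (a := a) (lam := lam) p
    (fun j => l j = L ∧ (DyadicCube n (l j) (k j) ∩ Cube n c r).Nonempty)
    (b := fun i => c i - 2 ^ (-L)) (by positivity)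
    fun j hj => dyadicCube_subset_cube (by rw [hj.1]) hrL hj.2
  rw [volume_cube_three_mul 0, volume_cube] at hpack
  calc _ = (∑' j, (if l j = L ∧ (DyadicCube n (l j) (k j) ∩ Cube n c r).Nonempty then
          lam j * atomHeight s (a j) (l j) (k j) * volume (DyadicCube n (l j) (k j)) else 0)) *
        (D ^ (1 / s - 1) * volume (Cube n c r) ^ (1 - 1 / s)) := by
        rw [tsum_congr hterm, ENNReal.tsum_mul_right]
    _ ≤ _ := mul_le_mul_left hpack _
    _ = _ := by rw [mul_assoc, hscale, mul_assoc]

lemma tsum_bigAtoms_le (p : ℝ) (hβ : 0 < (n : ℝ) * (1 / p - 1 / s)) (c : Fin n → ℝ) {r : ℝ}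
    (hr : 0 < r) :
    ∑' j, (if r < (2 : ℝ) ^ (-l j) ∧ (DyadicCube n (l j) (k j) ∩ Cube n c r).Nonempty then
        lam j * morreyNorm n s 1 (a j) * volume (Cube n c r) ^ (1 - 1 / s) else 0) ≤
      morreyNorm n p 1 (atomicMajorant n s l k a lam) *
        (3 ^ n * volume (Cube n c r)) ^ (1 - 1 / p) *
        (1 - ENNReal.ofReal (2 ^ (-((n : ℝ) * (1 / p - 1 / s)))))⁻¹ := by
  set F : ℕ → ℝ≥0∞ := fun j =>
    if r < (2 : ℝ) ^ (-l j) ∧ (DyadicCube n (l j) (k j) ∩ Cube n c r).Nonempty then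
      lam j * morreyNorm n s 1 (a j) * volume (Cube n c r) ^ (1 - 1 / s) else 0
  set B := morreyNorm n p 1 (atomicMajorant n s l k a lam) *
    (3 ^ n * volume (Cube n c r)) ^ (1 - 1 / p)
  have hlevel : ∀ L : ℤ, ∑' j, (if L = l j then F j else 0) ≤
      if r < (2 : ℝ) ^ (-L) then
        B * ENNReal.ofReal ((r / 2 ^ (-L)) ^ ((n : ℝ) * (1 / p - 1 / s))) else 0 := by
    intro L
    split_ifs with hrL
    · refine le_trans (ENNReal.tsum_le_tsum fun j => ?_) (tsum_levelAtoms_le p L c hr hrL.le)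
      by_cases hL : L = l j
      · subst hL
        simp only [F, hrL, true_and, if_true, le_refl]
      · simp [hL, eq_comm]
    · refine (ENNReal.tsum_eq_zero.2 fun j => ?_).le
      by_cases hL : L = l j
      · subst hL
        simp only [F, hrL, false_and, if_false, ite_self]
      · simp [hL]
  calc ∑' j, F j = ∑' L : ℤ, ∑' j, (if L = l j then F j else 0) := by
        rw [ENNReal.tsum_comm]
        exact tsum_congr fun j => (tsum_ite_eq (l j) fun _ => F j).symm
    _ ≤ ∑' L : ℤ, B * (if r < (2 : ℝ) ^ (-L) then
          ENNReal.ofReal ((r / 2 ^ (-L)) ^ ((n : ℝ) * (1 / p - 1 / s))) else 0) := by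
        simp only [mul_ite, mul_zero]
        exact ENNReal.tsum_le_tsum hlevel
    _ ≤ _ := by
        rw [ENNReal.tsum_mul_left]
        exact mul_le_mul_right (tsum_ite_rpow_div_zpow_le hr hβ) _

end Decomposition

def decompositionConst (n : ℕ) (p s : ℝ) : ℝ≥0∞ :=
  (3 ^ n) ^ (1 - 1 / p) * (1 + (1 - ENNReal.ofReal (2 ^ (-((n : ℝ) * (1 / p - 1 / s)))))⁻¹)

lemma decompositionConst_pos (n : ℕ) (p s : ℝ) : 0 < decompositionConst n p s :=
  ENNReal.mul_pos (ENNReal.rpow_pos (by positivity) (by simp)).ne' (by simp)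

lemma decompositionConst_ne_top {n : ℕ} {p s : ℝ} (hβ : 0 < (n : ℝ) * (1 / p - 1 / s)) :
    decompositionConst n p s ≠ ∞ := by
  have hq : ENNReal.ofReal (2 ^ (-((n : ℝ) * (1 / p - 1 / s)))) < 1 :=
    ENNReal.ofReal_lt_one.2 (Real.rpow_lt_one_of_one_lt_of_neg one_lt_two (neg_neg_of_pos hβ))
  refine ENNReal.mul_ne_top (ENNReal.rpow_ne_top_of_ne_zero (by simp) (by simp)) ?_
  exact ENNReal.add_ne_top.2 ⟨one_ne_top, ENNReal.inv_ne_top.2 (tsub_pos_of_lt hq).ne'⟩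

lemma morreyNorm_tsum_le {n : ℕ} {p s : ℝ} (hβ : 0 < (n : ℝ) * (1 / p - 1 / s))
    {l : ℕ → ℤ} {k : ℕ → Fin n → ℤ} {a : ℕ → E n → ℝ≥0∞} {lam : ℕ → ℝ≥0∞}
    (ha : ∀ j, Measurable (a j)) (hsupp : ∀ j, Function.support (a j) ⊆ DyadicCube n (l j) (k j)) :
    morreyNorm n p 1 (fun x => ∑' j, lam j * a j x) ≤
      decompositionConst n p s * morreyNorm n p 1 (atomicMajorant n s l k a lam) := by
  refine morreyNorm_le_of_setLIntegral_le fun c r hr => ?_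
  calc _ ≤ _ + _ := setLIntegral_cube_tsum_le ha hsupp c hr
    _ ≤ _ + _ := add_le_add (tsum_smallAtoms_le p c hr) (tsum_bigAtoms_le p hβ c hr)
    _ = _ := by
        rw [decompositionConst, ENNReal.mul_rpow_of_ne_top (by simp) (volume_cube_ne_top c r)]
        ring

theorem morrey_decomposition_one_general (n : ℕ) (p s : ℝ)
    (hp : 1 ≤ p) (hps : p < s) :
    ∃ C : ℝ≥0∞, 0 < C ∧ C ≠ ∞ ∧
      ∀ (l : ℕ → ℤ) (k : ℕ → Fin n → ℤ) (a : ℕ → E n → ℝ≥0∞) (lam : ℕ → ℝ≥0∞),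
        (∀ j, Measurable (a j)) →
        (∀ j x, x ∉ DyadicCube n (l j) (k j) → a j x = 0) →
        (∀ j, morreyNorm n s 1 (a j) ≠ ∞) →
        morreyNorm n p 1
          (fun x => ∑' j, lam j *
            (DyadicCube n (l j) (k j)).indicator (fun _ => (1 : ℝ≥0∞)) x) ≠ ∞ →
        morreyNorm n p 1 (fun x => ∑' j, lam j * a j x) ≤
          C * morreyNorm n p 1 (fun x =>
            ∑' j, lam j *
              (morreyNorm n s 1 (a j) / volume (DyadicCube n (l j) (k j)) ^ (1 / s)) *
              (DyadicCube n (l j) (k j)).indicator (fun _ => (1 : ℝ≥0∞)) x) := by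
  rcases Nat.eq_zero_or_pos n with rfl | hn
  · refine ⟨1, one_pos, one_ne_top, fun l k a lam ha hsupp _ _ => ?_⟩
    rw [one_mul, morreyNorm_zero_dim, morreyNorm_zero_dim]
    exact lintegral_tsum_le_lintegral_atomicMajorant ha
      fun j => Function.support_subset_iff'.2 (hsupp j)
  · have hβ : 0 < (n : ℝ) * (1 / p - 1 / s) :=
      mul_pos (Nat.cast_pos.2 hn) (sub_pos.2 (one_div_lt_one_div_of_lt (by linarith) hps))
    exact ⟨decompositionConst n p s, decompositionConst_pos n p s, decompositionConst_ne_top hβ,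
      fun l k a lam ha hsupp _ _ =>
        morreyNorm_tsum_le hβ ha fun j => Function.support_subset_iff'.2 (hsupp j)⟩

/-- atomic decomposition estimate for Morrey spaces, endpoint `q = t = 1`. -/
theorem morrey_decomposition_one (n : ℕ) (p s : ℝ)
    (hp : 1 ≤ p) (hs : 1 ≤ s) (hps : p < s) :
    ∃ C : ℝ≥0∞, 0 < C ∧ C ≠ ∞ ∧
      ∀ (l : ℕ → ℤ) (k : ℕ → Fin n → ℤ) (a : ℕ → E n → ℝ≥0∞) (lam : ℕ → ℝ≥0∞),
        (∀ j, Measurable (a j)) →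
        (∀ j x, x ∉ DyadicCube n (l j) (k j) → a j x = 0) →
        (∀ j, morreyNorm n s 1 (a j) ≠ ∞) →
        morreyNorm n p 1
          (fun x => ∑' j, lam j *
            (DyadicCube n (l j) (k j)).indicator (fun _ => (1 : ℝ≥0∞)) x) ≠ ∞ →
        morreyNorm n p 1 (fun x => ∑' j, lam j * a j x) ≤
          C * morreyNorm n p 1 (fun x =>
            ∑' j, lam j *
              (morreyNorm n s 1 (a j) / volume (DyadicCube n (l j) (k j)) ^ (1 / s)) *
              (DyadicCube n (l j) (k j)).indicator (fun _ => (1 : ℝ≥0∞)) x) :=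
  morrey_decomposition_one_general n p s hp hps
end
end

section
/- Let 1 ≤ v < ∞, l ∈ ℤ, and let Q be a dyadic cube of side 2^{-l}. For nonnegative measurable f₁, f₂: ‖ ∫_{B(0,2^{-l})} f₁(·+y) f₂(·−y) dy ‖_{L^v(Q)} ≲ |B(0,2^{-l})|^{1 + 1/v} · inf_{y₁ ∈ Q} M^{(v)}f₁(y₁) · inf_{y₂ ∈ Q} M^{(v)}f₂(y₂), where M^{(v)}f(x) = sup_{R>0} (|B(x,R)|^{-1} ∫_{B(x,R)} |f|^v)^{1/v} is the powered Hardy–Littlewood maximal operator. -/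
open MeasureTheory Metric ENNReal

noncomputable section

/-!
Hölder's inequality against the constant `1` on `B = B(0, r)` bounds the `L^v(Q)` norm of the
average by `|B|^{1 - 1/v}` times the `L^v(Q × B)` norm of `(z, y) ↦ f₁(z + y) f₂(z - y)`.
Substituting `u = z + y` and then dilating `y ↦ 2y` (Jacobian `2^{-n} ≤ 1`) bounds the latter by
`‖f₁‖_{L^v(D)} ‖f₂‖_{L^v(D)}` for one fixed ball `D` of radius `≈ r` around `Q`. Since `D` lies in a
ball of radius `(2√n + 3) r` about every point of `Q`, each factor is controlled by `M^{(v)} f_i` at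
any point of `Q`, so the two infima can be taken independently.
-/

theorem lintegral_rpow_le_measure_univ_rpow_mul {α : Type*} [MeasurableSpace α] (μ : Measure α)
    {v : ℝ} (hv : 1 ≤ v) {g : α → ℝ≥0∞} (hg : AEMeasurable g μ) :
    (∫⁻ a, g a ∂μ) ^ v ≤ μ Set.univ ^ (v - 1) * ∫⁻ a, g a ^ v ∂μ := by
  obtain rfl | hv1 := hv.eq_or_lt
  · simp
  have hpq := Real.HolderConjugate.conjExponent hv1
  have holder := ENNReal.lintegral_mul_le_Lp_mul_Lq μ hpq hg (aemeasurable_const (b := 1))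
  simp only [Pi.mul_apply, mul_one, ENNReal.one_rpow, lintegral_one] at holder
  have hv0 : 0 < v := by linarith
  calc (∫⁻ a, g a ∂μ) ^ v
      ≤ ((∫⁻ a, g a ^ v ∂μ) ^ (1 / v) * μ Set.univ ^ (1 / v.conjExponent)) ^ v := by gcongr
    _ = μ Set.univ ^ (v - 1) * ∫⁻ a, g a ^ v ∂μ := by
      rw [ENNReal.mul_rpow_of_nonneg _ _ hv0.le, ← ENNReal.rpow_mul, ← ENNReal.rpow_mul,
        one_div_mul_cancel hv0.ne', ENNReal.rpow_one, mul_comm, Real.conjExponent,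
        one_div_div, div_mul_cancel₀ _ hv0.ne']

section AddHaar

variable {W : Type*} [NormedAddCommGroup W] [NormedSpace ℝ W] [MeasurableSpace W] [BorelSpace W]
  [FiniteDimensional ℝ W] (μ : Measure W) [μ.IsAddHaarMeasure]

theorem lintegral_comp_smul_le {g : W → ℝ≥0∞} (hg : Measurable g) {c : ℝ} (hc : 1 ≤ |c|) :
    ∫⁻ y, g (c • y) ∂μ ≤ ∫⁻ w, g w ∂μ := by
  have hc0 : c ≠ 0 := abs_pos.mp (one_pos.trans_le hc)
  rw [← lintegral_map hg (measurable_const_smul c), Measure.map_addHaar_smul μ hc0,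
    lintegral_smul_measure, smul_eq_mul]
  refine mul_le_of_le_one_left' (ENNReal.ofReal_le_one.mpr ?_)
  rw [abs_inv, abs_pow]
  exact inv_le_one_of_one_le₀ (one_le_pow₀ hc)

theorem setLIntegral_ball_comp_sub_two_smul_le {g : W → ℝ≥0∞} (hg : Measurable g) (u : W) (r : ℝ) :
    ∫⁻ y in ball 0 r, g (u - (2 : ℝ) • y) ∂μ ≤ ∫⁻ w in ball u (2 * r), g w ∂μ := by
  have hmem : ∀ y ∈ ball (0 : W) r, u - (2 : ℝ) • y ∈ ball u (2 * r) := fun y hy => by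
    rw [mem_ball_zero_iff] at hy
    rw [mem_ball, dist_eq_norm, sub_sub_cancel_left, norm_neg, norm_smul, Real.norm_two]
    linarith
  calc ∫⁻ y in ball 0 r, g (u - (2 : ℝ) • y) ∂μ
      = ∫⁻ y in ball 0 r, (ball u (2 * r)).indicator g (u - (2 : ℝ) • y) ∂μ :=
        setLIntegral_congr_fun measurableSet_ball fun y hy =>
          (Set.indicator_of_mem (hmem y hy) g).symm
    _ ≤ ∫⁻ y, (ball u (2 * r)).indicator g (u - (2 : ℝ) • y) ∂μ := setLIntegral_le_lintegral _ _
    _ ≤ ∫⁻ t, (ball u (2 * r)).indicator g (u - t) ∂μ :=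
        lintegral_comp_smul_le μ
          ((hg.indicator measurableSet_ball).comp (measurable_const.sub measurable_id))
          (by norm_num)
    _ = ∫⁻ w in ball u (2 * r), g w ∂μ := by
        rw [lintegral_sub_left_eq_self, lintegral_indicator measurableSet_ball]

theorem setLIntegral_setLIntegral_mul_add_sub_le {g₁ g₂ : W → ℝ≥0∞} (hg₁ : Measurable g₁)
    (hg₂ : Measurable g₂) (q₀ : W) (s : ℝ) {r : ℝ} (hr : 0 ≤ r) :
    ∫⁻ z in closedBall q₀ s, ∫⁻ y in ball 0 r, g₁ (z + y) * g₂ (z - y) ∂μ ∂μ ≤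
      (∫⁻ u in ball q₀ (s + 3 * r), g₁ u ∂μ) * ∫⁻ w in ball q₀ (s + 3 * r), g₂ w ∂μ := by
  set D₁ := ball q₀ (s + r)
  set D := ball q₀ (s + 3 * r)
  have htranslate : ∀ y ∈ ball (0 : W) r, closedBall q₀ s ⊆ (· + y) ⁻¹' D₁ := fun y hy z hz => by
    rw [mem_ball_zero_iff] at hy
    rw [mem_closedBall] at hz
    rw [Set.mem_preimage, mem_ball]
    calc dist (z + y) q₀ ≤ dist (z + y) z + dist z q₀ := dist_triangle _ _ _
      _ < r + s := by rw [dist_self_add_left]; linarith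
      _ = s + r := add_comm r s
  have hdilate : ∀ u ∈ D₁, ball u (2 * r) ⊆ D := fun u hu =>
    ball_subset_ball' (by rw [mem_ball] at hu; linarith)
  have hmeas : Measurable fun p : W × W => g₁ p.2 * g₂ (p.2 - (2 : ℝ) • p.1) :=
    (hg₁.comp measurable_snd).mul (hg₂.comp (measurable_snd.sub (measurable_fst.const_smul _)))
  calc ∫⁻ z in closedBall q₀ s, ∫⁻ y in ball 0 r, g₁ (z + y) * g₂ (z - y) ∂μ ∂μ
      = ∫⁻ y in ball 0 r, ∫⁻ z in closedBall q₀ s, g₁ (z + y) * g₂ (z + y - (2 : ℝ) • y) ∂μ ∂μ := by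
        refine lintegral_lintegral_swap (Measurable.aemeasurable ?_) |>.trans ?_
        · exact (hg₁.comp (measurable_fst.add measurable_snd)).mul
            (hg₂.comp (measurable_fst.sub measurable_snd))
        · simp only [two_smul, add_sub_add_right_eq_sub]
    _ ≤ ∫⁻ y in ball 0 r, ∫⁻ u in D₁, g₁ u * g₂ (u - (2 : ℝ) • y) ∂μ ∂μ := by
        refine setLIntegral_mono' measurableSet_ball fun y hy => ?_
        calc _ ≤ ∫⁻ z in (· + y) ⁻¹' D₁, g₁ (z + y) * g₂ (z + y - (2 : ℝ) • y) ∂μ :=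
              lintegral_mono_set (htranslate y hy)
          _ = _ := (measurePreserving_add_right μ y).setLIntegral_comp_preimage_emb
              (MeasurableEquiv.addRight y).measurableEmbedding
              (fun u => g₁ u * g₂ (u - (2 : ℝ) • y)) D₁
    _ = ∫⁻ u in D₁, g₁ u * ∫⁻ y in ball 0 r, g₂ (u - (2 : ℝ) • y) ∂μ ∂μ := by
        rw [lintegral_lintegral_swap hmeas.aemeasurable]
        exact lintegral_congr fun u =>
          lintegral_const_mul _ (hg₂.comp (measurable_const.sub (measurable_id.const_smul _)))
    _ ≤ ∫⁻ u in D₁, g₁ u * ∫⁻ w in D, g₂ w ∂μ ∂μ := by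
        refine setLIntegral_mono' measurableSet_ball fun u hu => ?_
        exact mul_le_mul_right ((setLIntegral_ball_comp_sub_two_smul_le μ hg₂ u r).trans
          (lintegral_mono_set (hdilate u hu))) _
    _ ≤ (∫⁻ u in D, g₁ u ∂μ) * ∫⁻ w in D, g₂ w ∂μ := by
        rw [lintegral_mul_const _ hg₁]
        gcongr
        exact ball_subset_ball (by linarith)

end AddHaar

theorem cube_subset_closedBall (n : ℕ) (a : Fin n → ℝ) {r : ℝ} (hr : 0 ≤ r) :
    Cube n a r ⊆ closedBall (WithLp.toLp 2 a) (√n * r) := fun y hy => by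
  have hcoord : ∀ i, dist (y i) (a i) ≤ r := fun i => by
    rw [Real.dist_eq, abs_le]
    constructor <;> linarith [hy i]
  rw [mem_closedBall, EuclideanSpace.dist_eq, ← Real.sqrt_sq hr, ← Real.sqrt_mul (by positivity)]
  calc √(∑ i, dist (y i) (a i) ^ 2) ≤ √(∑ _i : Fin n, r ^ 2) := by gcongr with i; exact hcoord i
    _ = √(n * r ^ 2) := by simp

theorem setLIntegral_ball_rpow_le_powMax (n : ℕ) {v : ℝ} (hv : 0 < v) (f : E n → ℝ≥0∞) (q : E n)
    {ρ : ℝ} (hρ : 0 < ρ) :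
    ∫⁻ w in ball q ρ, f w ^ v ≤ volume (ball q ρ) * powMax n v f q ^ v := by
  have hvol0 : volume (ball q ρ) ≠ 0 := (measure_ball_pos volume q hρ).ne'
  have hvolt : volume (ball q ρ) ≠ ∞ := measure_ball_lt_top.ne
  have haverage : (volume (ball q ρ))⁻¹ * ∫⁻ w in ball q ρ, f w ^ v ≤ powMax n v f q ^ v := by
    have := ENNReal.rpow_le_rpow (le_iSup₂ (f := fun (R : ℝ) (_ : 0 < R) =>
      ((volume (ball q R))⁻¹ * ∫⁻ y in ball q R, f y ^ v) ^ (1 / v)) ρ hρ) hv.le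
    rwa [← ENNReal.rpow_mul, one_div_mul_cancel hv.ne', ENNReal.rpow_one] at this
  calc ∫⁻ w in ball q ρ, f w ^ v
      = volume (ball q ρ) * ((volume (ball q ρ))⁻¹ * ∫⁻ w in ball q ρ, f w ^ v) := by
        rw [← mul_assoc, ENNReal.mul_inv_cancel hvol0 hvolt, one_mul]
    _ ≤ volume (ball q ρ) * powMax n v f q ^ v := by gcongr

theorem setLIntegral_rpow_rpow_le_biInf_powMax (n : ℕ) {v : ℝ} (hv : 0 < v) (f : E n → ℝ≥0∞)
    {S D : Set (E n)} {R : ℝ} (hR : 0 < R) (hD : ∀ q ∈ S, D ⊆ ball q R) :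
    (∫⁻ w in D, f w ^ v) ^ (1 / v) ≤
      volume (ball (0 : E n) R) ^ (1 / v) * ⨅ q ∈ S, powMax n v f q := by
  have hV0 : volume (ball (0 : E n) R) ^ (1 / v) ≠ 0 :=
    (ENNReal.rpow_pos (measure_ball_pos volume 0 hR) measure_ball_lt_top.ne).ne'
  have hVt : volume (ball (0 : E n) R) ^ (1 / v) ≠ ∞ :=
    ENNReal.rpow_ne_top_of_nonneg (by positivity) measure_ball_lt_top.ne
  simp_rw [ENNReal.mul_iInf_of_ne hV0 hVt]
  refine le_iInf₂ fun q hq => ?_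
  calc (∫⁻ w in D, f w ^ v) ^ (1 / v)
      ≤ (volume (ball q R) * powMax n v f q ^ v) ^ (1 / v) := by
        gcongr
        exact (lintegral_mono_set (hD q hq)).trans (setLIntegral_ball_rpow_le_powMax n hv f q hR)
    _ = volume (ball (0 : E n) R) ^ (1 / v) * powMax n v f q := by
        rw [ENNReal.mul_rpow_of_nonneg _ _ (by positivity), ← ENNReal.rpow_mul,
          mul_one_div_cancel hv.ne', ENNReal.rpow_one, Measure.addHaar_ball_center]

theorem lqNorm_bilinear_average_le {n : ℕ} {v : ℝ} (hv : 1 ≤ v) {f₁ f₂ : E n → ℝ≥0∞}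
    (hf₁ : Measurable f₁) (hf₂ : Measurable f₂) {Q : Set (E n)} {q₀ : E n} {s r : ℝ}
    (hr : 0 ≤ r) (hQ : Q ⊆ closedBall q₀ s) :
    lqNorm v Q (fun z => ∫⁻ y in ball 0 r, f₁ (z + y) * f₂ (z - y)) ≤
      (volume (ball (0 : E n) r) ^ (v - 1)) ^ (1 / v) *
        (∫⁻ u in ball q₀ (s + 3 * r), f₁ u ^ v) ^ (1 / v) *
        (∫⁻ w in ball q₀ (s + 3 * r), f₂ w ^ v) ^ (1 / v) := by
  have hv0 : 0 < v := by linarith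
  set b := volume (ball (0 : E n) r)
  have hholder : ∀ z, (∫⁻ y in ball 0 r, f₁ (z + y) * f₂ (z - y)) ^ v ≤
      b ^ (v - 1) * ∫⁻ y in ball 0 r, f₁ (z + y) ^ v * f₂ (z - y) ^ v := fun z => by
    have := lintegral_rpow_le_measure_univ_rpow_mul (volume.restrict (ball (0 : E n) r)) hv
      ((hf₁.comp (measurable_const_add z)).mul (hf₂.comp (measurable_const_sub z))).aemeasurable
    simpa only [Measure.restrict_apply_univ, Pi.mul_apply, Function.comp_apply,
      ENNReal.mul_rpow_of_nonneg _ _ hv0.le] using this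
  have hbound : ∫⁻ z in Q, (∫⁻ y in ball 0 r, f₁ (z + y) * f₂ (z - y)) ^ v ≤
      b ^ (v - 1) * ((∫⁻ u in ball q₀ (s + 3 * r), f₁ u ^ v) *
        ∫⁻ w in ball q₀ (s + 3 * r), f₂ w ^ v) := by
    calc _ ≤ ∫⁻ z in Q, b ^ (v - 1) * ∫⁻ y in ball 0 r, f₁ (z + y) ^ v * f₂ (z - y) ^ v :=
          lintegral_mono hholder
      _ = b ^ (v - 1) * ∫⁻ z in Q, ∫⁻ y in ball 0 r, f₁ (z + y) ^ v * f₂ (z - y) ^ v :=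
          lintegral_const_mul' _ _
            (ENNReal.rpow_ne_top_of_nonneg (by linarith) measure_ball_lt_top.ne)
      _ ≤ _ := by
          gcongr
          exact (lintegral_mono_set hQ).trans (setLIntegral_setLIntegral_mul_add_sub_le volume
            (hf₁.pow_const v) (hf₂.pow_const v) q₀ s hr)
  calc lqNorm v Q _ ≤ (b ^ (v - 1) * ((∫⁻ u in ball q₀ (s + 3 * r), f₁ u ^ v) *
        ∫⁻ w in ball q₀ (s + 3 * r), f₂ w ^ v)) ^ (1 / v) := by
        unfold lqNorm
        gcongr
    _ = _ := by
        rw [ENNReal.mul_rpow_of_nonneg _ _ (by positivity),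
          ENNReal.mul_rpow_of_nonneg _ _ (by positivity), mul_assoc]

theorem rpow_sub_one_mul_rpow_mul_rpow_eq {v : ℝ} (hv : 1 ≤ v) (b κ : ℝ≥0∞) :
    (b ^ (v - 1)) ^ (1 / v) * (κ * b) ^ (1 / v) * (κ * b) ^ (1 / v) =
      (κ * κ) ^ (1 / v) * b ^ (1 + 1 / v) := by
  have hv0 : 0 < v := by linarith
  have hb : b ^ (v - 1) * (κ * b) * (κ * b) = κ * κ * b ^ (v + 1) := by
    rw [show v + 1 = v - 1 + 1 + 1 by ring,
      ENNReal.rpow_add_of_nonneg _ _ (by linarith) zero_le_one,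
      ENNReal.rpow_add_of_nonneg _ _ (by linarith) zero_le_one, ENNReal.rpow_one]
    ring
  rw [← ENNReal.mul_rpow_of_nonneg _ _ (by positivity),
    ← ENNReal.mul_rpow_of_nonneg _ _ (by positivity), hb,
    ENNReal.mul_rpow_of_nonneg _ _ (by positivity), ← ENNReal.rpow_mul, add_mul,
    mul_one_div_cancel hv0.ne', one_mul, add_comm 1]

/-- local `L^v` estimate for the bilinear average via powered maximal operators. -/
theorem bilinear_average_maximal (n : ℕ) (v : ℝ) (hv : 1 ≤ v) :
    ∃ C : ℝ≥0∞, 0 < C ∧ C ≠ ∞ ∧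
      ∀ (l : ℤ) (k : Fin n → ℤ) (f₁ f₂ : E n → ℝ≥0∞),
        Measurable f₁ → Measurable f₂ →
        lqNorm v (DyadicCube n l k)
            (fun z => ∫⁻ y in ball (0 : E n) ((2 : ℝ) ^ (-l)), f₁ (z + y) * f₂ (z - y)) ≤
          C * volume (ball (0 : E n) ((2 : ℝ) ^ (-l))) ^ (1 + 1 / v) *
            (⨅ y₁ ∈ DyadicCube n l k, powMax n v f₁ y₁) *
            (⨅ y₂ ∈ DyadicCube n l k, powMax n v f₂ y₂) := by
  have hv0 : 0 < v := by linarith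
  set c : ℝ := 2 * √n + 3
  set κ : ℝ≥0∞ := ENNReal.ofReal (c ^ n)
  refine ⟨(κ * κ) ^ (1 / v), ENNReal.rpow_pos (by positivity) (by finiteness),
    ENNReal.rpow_ne_top_of_nonneg (by positivity) (by finiteness), ?_⟩
  intro l k f₁ f₂ hf₁ hf₂
  set r : ℝ := 2 ^ (-l)
  have hr : 0 < r := by positivity
  set Q := DyadicCube n l k
  set q₀ : E n := WithLp.toLp 2 fun i => (k i : ℝ) * r
  have hQ : Q ⊆ closedBall q₀ (√n * r) := cube_subset_closedBall n _ hr.le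
  have hD : ∀ q ∈ Q, ball q₀ (√n * r + 3 * r) ⊆ ball q (c * r) := fun q hq =>
    ball_subset_ball' (by rw [dist_comm]; linarith [mem_closedBall.mp (hQ hq)])
  have hV : volume (ball (0 : E n) (c * r)) = κ * volume (ball (0 : E n) r) := by
    rw [Measure.addHaar_ball_mul_of_pos _ _ (by positivity), finrank_euclideanSpace_fin]
  set V := volume (ball (0 : E n) (c * r))
  calc _ ≤ _ := lqNorm_bilinear_average_le hv hf₁ hf₂ hr.le hQ
    _ ≤ (volume (ball (0 : E n) r) ^ (v - 1)) ^ (1 / v) *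
          (V ^ (1 / v) * ⨅ y₁ ∈ Q, powMax n v f₁ y₁) *
          (V ^ (1 / v) * ⨅ y₂ ∈ Q, powMax n v f₂ y₂) := by
        gcongr <;> exact setLIntegral_rpow_rpow_le_biInf_powMax n hv0 _ (by positivity) hD
    _ = _ := by
        rw [hV, ← rpow_sub_one_mul_rpow_mul_rpow_eq hv]
        ring
end
end
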